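/- There exists a unique algebra automorphism κ of H_1^i with κ(K) = -K, κ(E) = E, κ(F) = F; it is an involution, exchanges e_0 ↔ e_1, and satisfies κ ∘ S ∘ κ = S⁻¹ where S is the antipode. -/
import Mathlib


noncomputable section


namespace Stmt19

def X (n : Fin 3) : FreeAlgebra ℂ (Fin 3) := FreeAlgebra.ι ℂ n

/-- Relations of `H_1^i`: `KE = -EK`, `KF = -FK`, `EF = FE`, `E² = 0`, `F² = 0`, `K² = 1`. -/
inductive rel : FreeAlgebra ℂ (Fin 3) → FreeAlgebra ℂ (Fin 3) → Prop
  | ke : rel (X 0 * X 1) (-(X 1 * X 0))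
  | kf : rel (X 0 * X 2) (-(X 2 * X 0))
  | ef : rel (X 1 * X 2) (X 2 * X 1)
  | e2 : rel (X 1 ^ 2) 0
  | f2 : rel (X 2 ^ 2) 0
  | k2 : rel (X 0 ^ 2) 1

/-- The algebra `H_1^i`. -/
abbrev H1 := RingQuot rel

def K : H1 := RingQuot.mkAlgHom ℂ rel (X 0)
def E : H1 := RingQuot.mkAlgHom ℂ rel (X 1)
def F : H1 := RingQuot.mkAlgHom ℂ rel (X 2)
def e0 : H1 := (2 : ℂ)⁻¹ • (1 + K)
def e1 : H1 := (2 : ℂ)⁻¹ • (1 - K)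

/- Arithmetic lemmas restated for `H1` so that `rw` matches the `RingQuot` instances. -/
lemma nm (a b : H1) : -a * b = -(a * b) := neg_mul a b
lemma mn (a b : H1) : a * -b = -(a * b) := mul_neg a b
lemma nn (a : H1) : - -a = a := neg_neg a
lemma ma (a b c : H1) : a * b * c = a * (b * c) := mul_assoc a b c
lemma m1 (a : H1) : a * 1 = a := mul_one a
lemma om (a : H1) : 1 * a = a := one_mul a
lemma san (a b : H1) : a - b = a + -b := sub_eq_add_neg a b

lemma mk_rel {x y} (h : rel x y) :
    RingQuot.mkAlgHom ℂ rel x = RingQuot.mkAlgHom ℂ rel y :=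
  RingQuot.mkAlgHom_rel ℂ h

lemma ke : K * E = -(E * K) := by
  have := mk_rel rel.ke
  simpa [K, E, map_mul, map_neg] using this

lemma kf : K * F = -(F * K) := by
  have := mk_rel rel.kf
  simpa [K, F, map_mul, map_neg] using this

lemma efc : E * F = F * E := by
  have := mk_rel rel.ef
  simpa [E, F, map_mul] using this

lemma kk : K * K = 1 := by
  have := mk_rel rel.k2
  simpa [K, map_pow, map_one, sq] using this

lemma e2 : E * E = 0 := by
  have := mk_rel rel.e2
  simpa [E, map_pow, map_zero, sq] using this

lemma f2 : F * F = 0 := by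
  have := mk_rel rel.f2
  simpa [F, map_pow, map_zero, sq] using this

lemma kek : K * E * K = -E := by
  rw [ke, nm, ma, kk, m1]

lemma kfk : K * F * K = -F := by
  rw [kf, nm, ma, kk, m1]

/-- Algebra homs out of `H1` are determined by their values on `K`, `E`, `F`. -/
lemma hom_ext {A : Type*} [Semiring A] [Algebra ℂ A] {f g : H1 →ₐ[ℂ] A}
    (hK : f K = g K) (hE : f E = g E) (hF : f F = g F) : f = g := by
  have h : f.comp (RingQuot.mkAlgHom ℂ rel) = g.comp (RingQuot.mkAlgHom ℂ rel) := by
    apply FreeAlgebra.hom_ext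
    funext n
    rcases n with ⟨(_ | _ | _ | m), hn⟩
    · simpa [K, X] using hK
    · simpa [E, X] using hE
    · simpa [F, X] using hF
    · omega
  apply DFunLike.ext
  intro x
  obtain ⟨y, rfl⟩ := RingQuot.mkAlgHom_surjective ℂ rel x
  exact congrFun (congrArg DFunLike.coe h) y

def genmap : Fin 3 → H1 := ![-K, E, F]

def κhom : H1 →ₐ[ℂ] H1 :=
  RingQuot.liftAlgHom ℂ (s := rel) ⟨FreeAlgebra.lift ℂ genmap, by
    intro x y h
    cases h <;>
      simp only [X, genmap, map_mul, map_pow, map_one, map_neg, map_zero,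
        FreeAlgebra.lift_ι_apply, Matrix.cons_val_zero, Matrix.cons_val_one,
        Matrix.head_cons, Matrix.cons_val_two, Matrix.tail_cons, sq]
    · rw [nm, mn, nn, ke, nn]
    · rw [nm, mn, nn, kf, nn]
    · exact efc
    · exact e2
    · exact f2
    · rw [nm, mn, nn, kk]⟩

lemma κhom_K : κhom K = -K := by
  simp [κhom, K, X, RingQuot.liftAlgHom_mkAlgHom_apply, genmap]

lemma κhom_E : κhom E = E := by
  simp [κhom, E, X, RingQuot.liftAlgHom_mkAlgHom_apply, genmap]

lemma κhom_F : κhom F = F := by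
  simp [κhom, F, X, RingQuot.liftAlgHom_mkAlgHom_apply, genmap]

lemma κhom_invol : κhom.comp κhom = AlgHom.id ℂ H1 := by
  apply hom_ext <;>
    simp [κhom_K, κhom_E, κhom_F]

def κ₀ : H1 ≃ₐ[ℂ] H1 := AlgEquiv.ofAlgHom κhom κhom κhom_invol κhom_invol

/-- There is a unique algebra automorphism `κ` of `H_1^i` with `κ(K) = -K`, `κ(E) = E`,
`κ(F) = F`; it is an involution, exchanges `e₀ ↔ e₁`, and conjugates the antipode `S`
to its inverse: `κ ∘ S ∘ κ = S⁻¹`. -/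
theorem flip_automorphism :
    (∃! κ : H1 ≃ₐ[ℂ] H1, κ K = -K ∧ κ E = E ∧ κ F = F) ∧
    (∀ κ : H1 ≃ₐ[ℂ] H1, (κ K = -K ∧ κ E = E ∧ κ F = F) →
      (∀ x : H1, κ (κ x) = x) ∧ κ e0 = e1 ∧ κ e1 = e0 ∧
      (∀ S : H1 →ₗ[ℂ] H1, S 1 = 1 → (∀ x y : H1, S (x * y) = S y * S x) →
        S K = K → S E = -(K * E) → S F = -(F * K) →
        ∀ x : H1, κ (S (κ (S x))) = x ∧ S (κ (S (κ x))) = x)) := by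
  have main : ∀ κ : H1 ≃ₐ[ℂ] H1, (κ K = -K ∧ κ E = E ∧ κ F = F) →
      (κ : H1 →ₐ[ℂ] H1) = κhom := by
    rintro κ ⟨hK, hE, hF⟩
    apply hom_ext <;> simp [hK, hE, hF, κhom_K, κhom_E, κhom_F]
  constructor
  · refine ⟨κ₀, ⟨κhom_K, κhom_E, κhom_F⟩, ?_⟩
    intro κ h
    have h2 := main κ h
    apply AlgEquiv.ext
    intro x
    exact congrFun (congrArg DFunLike.coe h2) x
  · rintro κ h
    have hfun : ∀ x, κ x = κhom x := fun x =>
      congrFun (congrArg DFunLike.coe (main κ h)) x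
    obtain ⟨hK, hE, hF⟩ := h
    have hinvol : ∀ x : H1, κ (κ x) = x := by
      intro x
      rw [hfun, hfun]
      have := congrFun (congrArg DFunLike.coe κhom_invol) x
      simpa using this
    refine ⟨hinvol, ?_, ?_, ?_⟩
    · show κ ((2 : ℂ)⁻¹ • (1 + K)) = (2 : ℂ)⁻¹ • (1 - K)
      rw [map_smul, map_add, map_one, hK, san]
    · show κ ((2 : ℂ)⁻¹ • (1 - K)) = (2 : ℂ)⁻¹ • (1 + K)
      rw [map_smul, map_sub, map_one, hK, san, nn]
    · intro S hS1 hSm hSK hSE hSF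
      have hSKE : S (K * E) = E := by
        rw [hSm, hSE, hSK, nm, kek, nn]
      have hSFK : S (F * K) = F := by
        rw [hSm, hSF, hSK, mn, ← ma, kfk, nn]
      set κS : H1 →ₗ[ℂ] H1 := κ.toLinearMap ∘ₗ S with hκS
      set Sκ : H1 →ₗ[ℂ] H1 := S ∘ₗ κ.toLinearMap with hSκ
      have T1 : (κS ∘ₗ κS) 1 = 1 := by simp [κS, hS1]
      have Tmul : ∀ x y : H1, (κS ∘ₗ κS) (x * y) = (κS ∘ₗ κS) x * (κS ∘ₗ κS) y := by
        intro x y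
        simp only [κS, LinearMap.comp_apply, AlgEquiv.toLinearMap_apply]
        rw [hSm, map_mul, hSm, map_mul]
      have T1' : (Sκ ∘ₗ Sκ) 1 = 1 := by simp [Sκ, hS1]
      have Tmul' : ∀ x y : H1, (Sκ ∘ₗ Sκ) (x * y) = (Sκ ∘ₗ Sκ) x * (Sκ ∘ₗ Sκ) y := by
        intro x y
        simp only [Sκ, LinearMap.comp_apply, AlgEquiv.toLinearMap_apply]
        rw [map_mul, hSm, map_mul, hSm]
      let T : H1 →ₐ[ℂ] H1 := AlgHom.ofLinearMap (κS ∘ₗ κS) T1 Tmul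
      let T' : H1 →ₐ[ℂ] H1 := AlgHom.ofLinearMap (Sκ ∘ₗ Sκ) T1' Tmul'
      have hTid : T = AlgHom.id ℂ H1 := by
        apply hom_ext
        · show κ (S (κ (S K))) = K
          rw [hSK, hK, map_neg, hSK, map_neg, hK, nn]
        · show κ (S (κ (S E))) = E
          rw [hSE, map_neg, map_mul, hK, hE, nm, nn, hSKE, hE]
        · show κ (S (κ (S F))) = F
          rw [hSF, map_neg, map_mul, hF, hK, mn, nn, hSFK, hF]
      have hT'id : T' = AlgHom.id ℂ H1 := by
        apply hom_ext
        · show S (κ (S (κ K))) = K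
          rw [hK, map_neg, hSK, map_neg, hK, nn, hSK]
        · show S (κ (S (κ E))) = E
          rw [hE, hSE, map_neg, map_mul, hK, hE, nm, nn, hSKE]
        · show S (κ (S (κ F))) = F
          rw [hF, hSF, map_neg, map_mul, hF, hK, mn, nn, hSFK]
      intro x
      constructor
      · have := congrFun (congrArg DFunLike.coe hTid) x
        simpa [T, κS] using this
      · have := congrFun (congrArg DFunLike.coe hT'id) x
        simpa [T', Sκ] using this

end Stmt19
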